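/- arXiv:2402.10412 — 5 statements merged into one kernel-verified Lean document; each statement's English description precedes it below -/
import Mathlib

section
/- Let P and Q be probability measures on a measurable space Ω with P ≪ Q and Radon–Nikodym derivative ρ = dP/dQ. Let f : ℝ → ℝ be convex with f(1) = 0, let S ⊆ ℝ, and let f* : ℝ → ℝ satisfy Fenchel–Young domination for f on S. Then for every measurable function g : Ω → ℝ taking values in S such that g is P-integrable, f* ∘ g is Q-integrable, and f ∘ ρ is Q-integrable, one has ∫ g dP − ∫ f*(g) dQ ≤ ∫ f(ρ) dQ = D_f(P‖Q). -/
open MeasureTheory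

/-! The change of measure `∫ g dP = ∫ ρ g dQ` turns the left-hand side into `∫ (ρ g - f*(g)) dQ`,
and the Fenchel–Young inequality `ρ g - f*(g) ≤ f(ρ)` holds pointwise. -/

theorem integral_mul_sub_integral_le_of_fenchelYoung {Ω : Type*} [MeasurableSpace Ω]
    {μ : Measure Ω} {f fstar : ℝ → ℝ} {S : Set ℝ}
    (hFY : ∀ u ∈ S, ∀ v : ℝ, u * v - f v ≤ fstar u) {ρ g : Ω → ℝ} (hgS : ∀ ω, g ω ∈ S)
    (hρg_int : Integrable (fun ω => ρ ω * g ω) μ)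
    (hfg_int : Integrable (fun ω => fstar (g ω)) μ)
    (hfρ_int : Integrable (fun ω => f (ρ ω)) μ) :
    (∫ ω, ρ ω * g ω ∂μ) - (∫ ω, fstar (g ω) ∂μ) ≤ ∫ ω, f (ρ ω) ∂μ := by
  rw [sub_le_iff_le_add, ← integral_add hfρ_int hfg_int]
  exact integral_mono hρg_int (hfρ_int.add hfg_int) fun ω => by
    linarith [hFY (g ω) (hgS ω) (ρ ω)]

theorem integral_sub_integral_le_integral_rnDeriv_of_fenchelYoung {Ω : Type*}
    [MeasurableSpace Ω] {P Q : Measure Ω} [SigmaFinite P] [SigmaFinite Q] (hPQ : P ≪ Q)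
    {f fstar : ℝ → ℝ} {S : Set ℝ} (hFY : ∀ u ∈ S, ∀ v : ℝ, u * v - f v ≤ fstar u)
    {g : Ω → ℝ} (hgS : ∀ ω, g ω ∈ S) (hg_int : Integrable g P)
    (hfg_int : Integrable (fun ω => fstar (g ω)) Q)
    (hfρ_int : Integrable (fun ω => f (P.rnDeriv Q ω).toReal) Q) :
    (∫ ω, g ω ∂P) - (∫ ω, fstar (g ω) ∂Q) ≤ ∫ ω, f (P.rnDeriv Q ω).toReal ∂Q := by
  rw [← integral_toReal_rnDeriv_mul hPQ]
  exact integral_mul_sub_integral_le_of_fenchelYoung hFY hgS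
    ((integrable_toReal_rnDeriv_mul_iff hPQ).mpr hg_int) hfg_int hfρ_int

theorem fdiv_variational_lower_bound_general
    {Ω : Type*} [MeasurableSpace Ω]
    (P Q : Measure Ω) [IsProbabilityMeasure P] [IsProbabilityMeasure Q]
    (hPQ : P ≪ Q)
    (ρ : Ω → ℝ) (hρ : ρ = fun ω => (P.rnDeriv Q ω).toReal)
    (f : ℝ → ℝ)
    (S : Set ℝ) (fstar : ℝ → ℝ)
    (hFY : ∀ u ∈ S, ∀ v : ℝ, u * v - f v ≤ fstar u)
    (g : Ω → ℝ) (hgS : ∀ ω, g ω ∈ S)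
    (hg_int : Integrable g P)
    (hfg_int : Integrable (fun ω => fstar (g ω)) Q)
    (hfρ_int : Integrable (fun ω => f (ρ ω)) Q) :
    (∫ ω, g ω ∂P) - (∫ ω, fstar (g ω) ∂Q) ≤ ∫ ω, f (ρ ω) ∂Q := by
  subst hρ
  exact integral_sub_integral_le_integral_rnDeriv_of_fenchelYoung hPQ hFY hgS hg_int hfg_int
    hfρ_int

/-- Variational lower bound on the f-divergence (Eq. (3) of the paper):
for `P ≪ Q` with Radon–Nikodym derivative `ρ`, a convex `f` with `f 1 = 0`, and `f*`
satisfying Fenchel–Young domination for `f` on `S`, every `S`-valued measurable `g`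
satisfies `∫ g dP − ∫ f*(g) dQ ≤ ∫ f(ρ) dQ = D_f(P‖Q)`. -/
theorem fdiv_variational_lower_bound
    {Ω : Type*} [MeasurableSpace Ω]
    (P Q : Measure Ω) [IsProbabilityMeasure P] [IsProbabilityMeasure Q]
    (hPQ : P ≪ Q)
    (ρ : Ω → ℝ) (hρ : ρ = fun ω => (P.rnDeriv Q ω).toReal)
    (f : ℝ → ℝ) (hf_conv : ConvexOn ℝ Set.univ f) (hf1 : f 1 = 0)
    (S : Set ℝ) (fstar : ℝ → ℝ)
    (hFY : ∀ u ∈ S, ∀ v : ℝ, u * v - f v ≤ fstar u)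
    (g : Ω → ℝ) (hg_meas : Measurable g) (hgS : ∀ ω, g ω ∈ S)
    (hg_int : Integrable g P)
    (hfg_int : Integrable (fun ω => fstar (g ω)) Q)
    (hfρ_int : Integrable (fun ω => f (ρ ω)) Q) :
    (∫ ω, g ω ∂P) - (∫ ω, fstar (g ω) ∂Q) ≤ ∫ ω, f (ρ ω) ∂Q :=
  fdiv_variational_lower_bound_general P Q hPQ ρ hρ f S fstar hFY g hgS hg_int hfg_int hfρ_int
end

section
/- Let P and Q be probability measures on a measurable space Ω with P ≪ Q and Radon–Nikodym derivative ρ = dP/dQ satisfying ρ(ω) > 0 for Q-almost every ω. Let f : ℝ → ℝ be convex with f(1) = 0 and differentiable on (0, ∞), and let f* : ℝ → ℝ satisfy the Fenchel–Young equality f*(f'(t)) = t·f'(t) − f(t) for every t > 0. Set g = f' ∘ ρ. If g is P-integrable, f* ∘ g is Q-integrable, and f ∘ ρ is Q-integrable, then ∫ g dP − ∫ f*(g) dQ = ∫ f(ρ) dQ = D_f(P‖Q). -/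
/-!
Changing measure, `∫ g dP = ∫ ρ g dQ` with `ρ = dP/dQ`, so the objective becomes
`∫ (ρ g - f*(g)) dQ`; at `t = ρ ω > 0` the Fenchel–Young equality turns this integrand into
`f (ρ ω)`.
-/

open MeasureTheory

namespace MeasureTheory

variable {Ω : Type*} [MeasurableSpace Ω] {P Q : Measure Ω}

lemma integral_sub_integral_eq_integral_toReal_rnDeriv_mul_sub
    [SigmaFinite P] [P.HaveLebesgueDecomposition Q] (hPQ : P ≪ Q) {g h : Ω → ℝ}
    (hg : Integrable g P) (hh : Integrable h Q) :
    ∫ ω, g ω ∂P - ∫ ω, h ω ∂Q = ∫ ω, (P.rnDeriv Q ω).toReal * g ω - h ω ∂Q := by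
  rw [integral_sub ((integrable_toReal_rnDeriv_mul_iff hPQ).2 hg) hh,
    integral_toReal_rnDeriv_mul hPQ]

end MeasureTheory

theorem fdiv_variational_attained_general
    {Ω : Type*} [MeasurableSpace Ω]
    (P Q : Measure Ω) [IsProbabilityMeasure P] [IsProbabilityMeasure Q]
    (hPQ : P ≪ Q)
    (ρ : Ω → ℝ) (hρ : ρ = fun ω => (P.rnDeriv Q ω).toReal)
    (hρ_pos : ∀ᵐ ω ∂Q, 0 < ρ ω)
    (f : ℝ → ℝ)
    (fstar : ℝ → ℝ)
    (hFYeq : ∀ t : ℝ, 0 < t → fstar (deriv f t) = t * deriv f t - f t)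
    (g : Ω → ℝ) (hg : g = fun ω => deriv f (ρ ω))
    (hg_int : Integrable g P)
    (hfg_int : Integrable (fun ω => fstar (g ω)) Q) :
    (∫ ω, g ω ∂P) - (∫ ω, fstar (g ω) ∂Q) = ∫ ω, f (ρ ω) ∂Q := by
  rw [integral_sub_integral_eq_integral_toReal_rnDeriv_mul_sub hPQ hg_int hfg_int]
  refine integral_congr_ae ?_
  filter_upwards [hρ_pos] with ω hω
  subst hρ hg
  rw [hFYeq _ hω, sub_sub_cancel]

/-- The supremum in the variational representation of the f-divergence is attained at
the witness `g* = f' ∘ (dP/dQ)`: under the Fenchel–Young equality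
`f*(f'(t)) = t·f'(t) − f(t)` for `t > 0`, one has
`∫ g* dP − ∫ f*(g*) dQ = ∫ f(ρ) dQ = D_f(P‖Q)`. -/
theorem fdiv_variational_attained
    {Ω : Type*} [MeasurableSpace Ω]
    (P Q : Measure Ω) [IsProbabilityMeasure P] [IsProbabilityMeasure Q]
    (hPQ : P ≪ Q)
    (ρ : Ω → ℝ) (hρ : ρ = fun ω => (P.rnDeriv Q ω).toReal)
    (hρ_pos : ∀ᵐ ω ∂Q, 0 < ρ ω)
    (f : ℝ → ℝ) (hf_conv : ConvexOn ℝ Set.univ f) (hf1 : f 1 = 0)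
    (hf_diff : DifferentiableOn ℝ f (Set.Ioi 0))
    (fstar : ℝ → ℝ)
    (hFYeq : ∀ t : ℝ, 0 < t → fstar (deriv f t) = t * deriv f t - f t)
    (g : Ω → ℝ) (hg : g = fun ω => deriv f (ρ ω))
    (hg_int : Integrable g P)
    (hfg_int : Integrable (fun ω => fstar (g ω)) Q)
    (hfρ_int : Integrable (fun ω => f (ρ ω)) Q) :
    (∫ ω, g ω ∂P) - (∫ ω, fstar (g ω) ∂Q) = ∫ ω, f (ρ ω) ∂Q :=
  fdiv_variational_attained_general P Q hPQ ρ hρ hρ_pos f fstar hFYeq g hg hg_int hfg_int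
end

section
/- (Theorem 1) Let (Ω, μ) be a probability space, let 𝒜 be a standard Borel space (the answer space), and let A, A★, h_1, …, h_N : Ω → 𝒜 be random variables (the evaluated LLM's answers, the optimal LLM's answers, and the answers of N reference LLMs). Assume: (constant expertise) λ_1, …, λ_N ≥ 0 with ∑_{i=1}^N λ_i = 1; (conditional independence) for each i, A and h_i are conditionally independent given A★. Let f : ℝ → ℝ be convex with f(1) = 0, let S ⊆ ℝ, let f* : ℝ → ℝ satisfy Fenchel–Young domination for f on S, and let g★ : 𝒜 × 𝒜 → ℝ be measurable with values in S. For each i, set P_i = law(A, h_i), Q_i = law(A) ⊗ law(h_i), P★_i = law(A★, h_i), Q★_i = law(A★) ⊗ law(h_i), and assume: P_i ≪ Q_i and P★_i ≪ Q★_i with f composed with the respective densities integrable; g★ is integrable with respect to P_i and P★_i and f* ∘ g★ is integrable with respect to Q_i and Q★_i; and g★ attains the variational representation for the optimal LLM, i.e. ∫ g★ dP★_i − ∫ f*(g★) dQ★_i = D_f(P★_i ‖ Q★_i). Then ∑_{i=1}^N λ_i ( ∫ g★ dP★_i − ∫ f*(g★) dQ★_i ) ≥ ∑_{i=1}^N λ_i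 ( ∫ g★ dP_i − ∫ f*(g★) dQ_i ); that is, E_X[FEWL(A★(X), {h_i(X)}_{i∈[N]})] ≥ E_X[FEWL(A(X), {h_i(X)}_{i∈[N]})]. -/
/-!
By conditional independence, the law of `((A★, hᵢ), A)` is `M := Q★ᵢ ⊗ₘ κ` reweighted by
`ρ = dP★ᵢ/dQ★ᵢ` on the first factor, where `κ` is the conditional law of `A` given `A★`.
Pushing `M` and its reweighting forward along `((a★, b), a) ↦ (a, b)` gives `Qᵢ` and `Pᵢ`, so
`∫ g★ dPᵢ − ∫ f*(g★) dQᵢ = ∫ (ρ · g★ − f*(g★)) dM`. Fenchel–Young bounds the integrand by `f(ρ)`,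
whose `M`-integral is `D_f(P★ᵢ ‖ Q★ᵢ)`, the value `g★` attains for `A★`.
-/

open MeasureTheory ProbabilityTheory
open scoped ENNReal

section

variable {Ω α β γ δ : Type*} [MeasurableSpace Ω] [MeasurableSpace α] [MeasurableSpace β]
  [MeasurableSpace γ] [MeasurableSpace δ]

lemma ProbabilityTheory.CondIndepFun.map_eq_compProd_prodMkRight_condDistrib [StandardBorelSpace Ω]
    [StandardBorelSpace β] [Nonempty β] [StandardBorelSpace δ] [Nonempty δ]
    {μ : Measure Ω} [IsFiniteMeasure μ] {X : Ω → β} {Y : Ω → δ} {Z : Ω → γ}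
    (hX : Measurable X) (hY : Measurable Y) (hZ : Measurable Z) (hXY : X ⟂ᵢ[Z, hZ; μ] Y) :
    μ.map (fun ω ↦ ((Z ω, Y ω), X ω)) =
      μ.map (fun ω ↦ (Z ω, Y ω)) ⊗ₘ (condDistrib X Z μ).prodMkRight δ := by
  rw [← compProd_map_condDistrib hX.aemeasurable]
  exact Measure.compProd_congr
    ((condIndepFun_iff_condDistrib_prod_ae_eq_prodMkRight hX hY hZ).mp hXY.symm)

lemma MeasureTheory.Measure.map_compProd_prodMkRight_eq_prod (ν₁ : Measure γ) (ν₂ : Measure δ)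
    [IsFiniteMeasure ν₁] [IsFiniteMeasure ν₂] (κ : Kernel γ β) [IsMarkovKernel κ] :
    ((ν₁.prod ν₂) ⊗ₘ κ.prodMkRight δ).map (fun p ↦ (p.2, p.1.2)) = (κ ∘ₘ ν₁).prod ν₂ := by
  refine (Measure.prod_eq fun s t hs ht ↦ ?_).symm
  have hpre : (fun p : (γ × δ) × β ↦ (p.2, p.1.2)) ⁻¹' (s ×ˢ t) = (Set.univ ×ˢ t) ×ˢ s := by
    ext p; simp [and_comm]
  have hind : (Set.univ ×ˢ t).indicator (fun p ↦ κ.prodMkRight δ p s)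
      = fun p : γ × δ ↦ κ p.1 s * t.indicator 1 p.2 := by
    ext p; by_cases hp : p.2 ∈ t <;> simp [hp]
  rw [Measure.map_apply (by fun_prop) (hs.prod ht), hpre,
    Measure.compProd_apply_prod (MeasurableSet.univ.prod ht) hs,
    ← lintegral_indicator (MeasurableSet.univ.prod ht), Measure.bind_apply hs κ.aemeasurable,
    hind, lintegral_prod_mul (κ.measurable_coe hs).aemeasurable
      (measurable_one.indicator ht).aemeasurable, lintegral_indicator_one ht]

lemma integral_map_withDensity_sub_integral_map_le {M : Measure α} {φ : α → β}
    (hφ : Measurable φ) {r : α → ℝ≥0∞} (hr : Measurable r) (hr_lt_top : ∀ᵐ x ∂M, r x < ∞)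
    {f fstar : ℝ → ℝ} {S : Set ℝ} (hFY : ∀ u ∈ S, ∀ v : ℝ, u * v - f v ≤ fstar u)
    {g : β → ℝ} (hg : Measurable g) (hgS : ∀ z, g z ∈ S)
    (hg_int : Integrable g ((M.withDensity r).map φ))
    (hfg_int : Integrable (fun z ↦ fstar (g z)) (M.map φ))
    (hf_int : Integrable (fun x ↦ f (r x).toReal) M) :
    (∫ z, g z ∂(M.withDensity r).map φ) - ∫ z, fstar (g z) ∂M.map φ ≤
      ∫ x, f (r x).toReal ∂M := by
  have hgr_int : Integrable (fun x ↦ (r x).toReal • g (φ x)) M := by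
    rw [← integrable_withDensity_iff_integrable_smul' hr hr_lt_top]
    exact (integrable_map_measure hg.aestronglyMeasurable hφ.aemeasurable).mp hg_int
  have hfgφ_int : Integrable (fun x ↦ fstar (g (φ x))) M :=
    (integrable_map_measure hfg_int.aestronglyMeasurable hφ.aemeasurable).mp hfg_int
  rw [integral_map hφ.aemeasurable hg.aestronglyMeasurable,
    integral_withDensity_eq_integral_toReal_smul₀ hr.aemeasurable hr_lt_top,
    integral_map hφ.aemeasurable hfg_int.aestronglyMeasurable, ← integral_sub hgr_int hfgφ_int]
  refine integral_mono (hgr_int.sub hfgφ_int) hf_int fun x ↦ ?_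
  have hFY_x := hFY (g (φ x)) (hgS _) (r x).toReal
  simp only [smul_eq_mul]
  linarith

lemma integral_sub_integral_le_integral_rnDeriv_of_condIndepFun [StandardBorelSpace Ω]
    [StandardBorelSpace β] [Nonempty β] [StandardBorelSpace δ] [Nonempty δ]
    {μ : Measure Ω} [IsFiniteMeasure μ] {X : Ω → β} {Y : Ω → δ} {Z : Ω → γ}
    (hX : Measurable X) (hY : Measurable Y) (hZ : Measurable Z) (hXY : X ⟂ᵢ[Z, hZ; μ] Y)
    {f fstar : ℝ → ℝ} {S : Set ℝ} (hFY : ∀ u ∈ S, ∀ v : ℝ, u * v - f v ≤ fstar u)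
    {g : β × δ → ℝ} (hg : Measurable g) (hgS : ∀ z, g z ∈ S)
    (hZY_ac : μ.map (fun ω ↦ (Z ω, Y ω)) ≪ (μ.map Z).prod (μ.map Y))
    (hf_int : Integrable (fun z ↦ f ((μ.map (fun ω ↦ (Z ω, Y ω))).rnDeriv
      ((μ.map Z).prod (μ.map Y)) z).toReal) ((μ.map Z).prod (μ.map Y)))
    (hg_int : Integrable g (μ.map fun ω ↦ (X ω, Y ω)))
    (hfg_int : Integrable (fun z ↦ fstar (g z)) ((μ.map X).prod (μ.map Y))) :
    (∫ z, g z ∂μ.map fun ω ↦ (X ω, Y ω)) - ∫ z, fstar (g z) ∂(μ.map X).prod (μ.map Y) ≤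
      ∫ z, f ((μ.map (fun ω ↦ (Z ω, Y ω))).rnDeriv ((μ.map Z).prod (μ.map Y)) z).toReal
        ∂(μ.map Z).prod (μ.map Y) := by
  set Pstar := μ.map (fun ω ↦ (Z ω, Y ω))
  set Qstar := (μ.map Z).prod (μ.map Y)
  set ρ := Pstar.rnDeriv Qstar
  set M := Qstar ⊗ₘ (condDistrib X Z μ).prodMkRight δ
  set φ : (γ × δ) × β → β × δ := fun p ↦ (p.2, p.1.2)
  have hφ : Measurable φ := by fun_prop
  have hQstar : Qstar = M.map Prod.fst := (Measure.fst_compProd _ _).symm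
  have hjoint : μ.map (fun ω ↦ ((Z ω, Y ω), X ω)) = M.withDensity fun p ↦ ρ p.1 := by
    rw [CondIndepFun.map_eq_compProd_prodMkRight_condDistrib hX hY hZ hXY,
      ← Measure.withDensity_rnDeriv_eq _ _ (hZY_ac.compProd_left _)]
    exact withDensity_congr_ae (rnDeriv_measure_compProd_left _ _ _)
  have hP : μ.map (fun ω ↦ (X ω, Y ω)) = (M.withDensity fun p ↦ ρ p.1).map φ := by
    rw [← hjoint, Measure.map_map hφ (by fun_prop)]
    rfl
  have hQ : (μ.map X).prod (μ.map Y) = M.map φ := by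
    rw [Measure.map_compProd_prodMkRight_eq_prod,
      condDistrib_comp_map hZ.aemeasurable hX.aemeasurable]
  have hρ_lt_top : ∀ᵐ p ∂M, ρ p.1 < ∞ :=
    ae_of_ae_map measurable_fst.aemeasurable (by rw [← hQstar]; exact Measure.rnDeriv_lt_top Pstar Qstar)
  rw [hP] at hg_int ⊢
  rw [hQ] at hfg_int ⊢
  rw [hQstar] at hf_int ⊢
  rw [integral_map measurable_fst.aemeasurable hf_int.aestronglyMeasurable]
  exact integral_map_withDensity_sub_integral_map_le hφ (by fun_prop) hρ_lt_top hFY hg hgS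
    hg_int hfg_int
    ((integrable_map_measure hf_int.aestronglyMeasurable measurable_fst.aemeasurable).mp hf_int)

end

theorem fewl_scores_best_llm_highest_general
    {Ω 𝒜 : Type*}
    [MeasurableSpace Ω] [StandardBorelSpace Ω]
    [MeasurableSpace 𝒜] [StandardBorelSpace 𝒜]
    (μ : Measure Ω) [IsProbabilityMeasure μ]
    {N : ℕ}
    (A Astar : Ω → 𝒜) (h : Fin N → Ω → 𝒜)
    (hA : Measurable A) (hAstar : Measurable Astar) (hh : ∀ i, Measurable (h i))
    -- constant expertise weights
    (lam : Fin N → ℝ) (hlam_nonneg : ∀ i, 0 ≤ lam i)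
    -- conditional independence: A and h i are conditionally independent given Astar
    (hCI : ∀ i, CondIndepFun (MeasurableSpace.comap Astar inferInstance)
      (hAstar.comap_le) A (h i) μ)
    (f : ℝ → ℝ)
    (S : Set ℝ) (fstar : ℝ → ℝ)
    (hFY : ∀ u ∈ S, ∀ v : ℝ, u * v - f v ≤ fstar u)
    (gstar : 𝒜 × 𝒜 → ℝ) (hgstar_meas : Measurable gstar) (hgstarS : ∀ z, gstar z ∈ S)
    (P Q Pstar Qstar : Fin N → Measure (𝒜 × 𝒜))
    (hP : ∀ i, P i = μ.map (fun ω => (A ω, h i ω)))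
    (hQ : ∀ i, Q i = (μ.map A).prod (μ.map (h i)))
    (hPstar : ∀ i, Pstar i = μ.map (fun ω => (Astar ω, h i ω)))
    (hQstar : ∀ i, Qstar i = (μ.map Astar).prod (μ.map (h i)))
    -- absolute continuity with integrable f-densities
    (hac_star : ∀ i, Pstar i ≪ Qstar i)
    (hint_star : ∀ i,
      Integrable (fun z => f (((Pstar i).rnDeriv (Qstar i) z).toReal)) (Qstar i))
    -- integrability of the witness
    (hg_int : ∀ i, Integrable gstar (P i))
    (hfg_int : ∀ i, Integrable (fun z => fstar (gstar z)) (Q i))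
    -- g★ attains the variational representation for the optimal LLM
    (hattain : ∀ i,
      (∫ z, gstar z ∂(Pstar i)) - (∫ z, fstar (gstar z) ∂(Qstar i)) =
        ∫ z, f (((Pstar i).rnDeriv (Qstar i) z).toReal) ∂(Qstar i)) :
    ∑ i, lam i * ((∫ z, gstar z ∂(Pstar i)) - (∫ z, fstar (gstar z) ∂(Qstar i))) ≥
      ∑ i, lam i * ((∫ z, gstar z ∂(P i)) - (∫ z, fstar (gstar z) ∂(Q i))) := by
  have : Nonempty 𝒜 := ⟨A (nonempty_of_isProbabilityMeasure μ).some⟩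
  obtain rfl : P = _ := funext hP
  obtain rfl : Q = _ := funext hQ
  obtain rfl : Pstar = _ := funext hPstar
  obtain rfl : Qstar = _ := funext hQstar
  refine Finset.sum_le_sum fun i _ ↦ mul_le_mul_of_nonneg_left ?_ (hlam_nonneg i)
  rw [hattain i]
  exact integral_sub_integral_le_integral_rnDeriv_of_condIndepFun hA (hh i) hAstar (hCI i) hFY
    hgstar_meas hgstarS (hac_star i) (hint_star i) (hg_int i) (hfg_int i)

/-- (Theorem 1) FEWL scores the optimal LLM `A★` at least as high as any LLM `A`, in
expectation, even when only reference-LLM answers (not gold-standard answers) are used: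
under constant expertise weights `λ_i`, conditional independence `h_i ⫫ A | A★`,
Fenchel–Young domination of `f*` for `f` on `S`, and attainment of the variational
representation by the witness `g★` for the optimal LLM, one has
`∑ i, λ_i (∫ g★ dP★_i − ∫ f*(g★) dQ★_i) ≥ ∑ i, λ_i (∫ g★ dP_i − ∫ f*(g★) dQ_i)`. -/
theorem fewl_scores_best_llm_highest
    {Ω 𝒜 : Type*}
    [MeasurableSpace Ω] [StandardBorelSpace Ω]
    [MeasurableSpace 𝒜] [StandardBorelSpace 𝒜]
    (μ : Measure Ω) [IsProbabilityMeasure μ]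
    {N : ℕ}
    (A Astar : Ω → 𝒜) (h : Fin N → Ω → 𝒜)
    (hA : Measurable A) (hAstar : Measurable Astar) (hh : ∀ i, Measurable (h i))
    -- constant expertise weights
    (lam : Fin N → ℝ) (hlam_nonneg : ∀ i, 0 ≤ lam i) (hlam_sum : ∑ i, lam i = 1)
    -- conditional independence: A and h i are conditionally independent given Astar
    (hCI : ∀ i, CondIndepFun (MeasurableSpace.comap Astar inferInstance)
      (hAstar.comap_le) A (h i) μ)
    (f : ℝ → ℝ) (hf_conv : ConvexOn ℝ Set.univ f) (hf1 : f 1 = 0)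
    (S : Set ℝ) (fstar : ℝ → ℝ)
    (hFY : ∀ u ∈ S, ∀ v : ℝ, u * v - f v ≤ fstar u)
    (gstar : 𝒜 × 𝒜 → ℝ) (hgstar_meas : Measurable gstar) (hgstarS : ∀ z, gstar z ∈ S)
    (P Q Pstar Qstar : Fin N → Measure (𝒜 × 𝒜))
    (hP : ∀ i, P i = μ.map (fun ω => (A ω, h i ω)))
    (hQ : ∀ i, Q i = (μ.map A).prod (μ.map (h i)))
    (hPstar : ∀ i, Pstar i = μ.map (fun ω => (Astar ω, h i ω)))
    (hQstar : ∀ i, Qstar i = (μ.map Astar).prod (μ.map (h i)))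
    -- absolute continuity with integrable f-densities
    (hac : ∀ i, P i ≪ Q i)
    (hac_star : ∀ i, Pstar i ≪ Qstar i)
    (hint : ∀ i, Integrable (fun z => f (((P i).rnDeriv (Q i) z).toReal)) (Q i))
    (hint_star : ∀ i,
      Integrable (fun z => f (((Pstar i).rnDeriv (Qstar i) z).toReal)) (Qstar i))
    -- integrability of the witness
    (hg_int : ∀ i, Integrable gstar (P i))
    (hg_int_star : ∀ i, Integrable gstar (Pstar i))
    (hfg_int : ∀ i, Integrable (fun z => fstar (gstar z)) (Q i))
    (hfg_int_star : ∀ i, Integrable (fun z => fstar (gstar z)) (Qstar i))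
    -- g★ attains the variational representation for the optimal LLM
    (hattain : ∀ i,
      (∫ z, gstar z ∂(Pstar i)) - (∫ z, fstar (gstar z) ∂(Qstar i)) =
        ∫ z, f (((Pstar i).rnDeriv (Qstar i) z).toReal) ∂(Qstar i)) :
    ∑ i, lam i * ((∫ z, gstar z ∂(Pstar i)) - (∫ z, fstar (gstar z) ∂(Qstar i))) ≥
      ∑ i, lam i * ((∫ z, gstar z ∂(P i)) - (∫ z, fstar (gstar z) ∂(Q i))) :=
  fewl_scores_best_llm_highest_general μ A Astar h hA hAstar hh lam hlam_nonneg hCI f S fstar hFY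
    gstar hgstar_meas hgstarS P Q Pstar Qstar hP hQ hPstar hQstar hac_star hint_star hg_int hfg_int
    hattain
end

section
/- Let f(v) = v·log v − (v + 1)·log((v + 1)/2) for v > 0 (the Jensen–Shannon generator). For every real u with u < log 2, the supremum over v > 0 of u·v − f(v) equals −log(2 − e^u). That is, the Fenchel conjugate of the Jensen–Shannon generator is f*(u) = −log(2 − e^u) on (−∞, log 2). -/
/-!
Put `a = 2 - e^u`. For `v > 0` the objective splits as
`u v - f(v) = v log(e^u (v+1) / (2v)) + log(a (v+1) / 2) - log a`, and the tangent-line bound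
`x log (y / x) ≤ y - x` bounds the first two terms by `e^u (v+1)/2 - v` and `a (v+1)/2 - 1`,
which add up to `0` because `e^u + a = 2`. Both bounds are equalities at `v = e^u / a`,
so the supremum `-log a` is attained there.
-/

open Real

noncomputable def jsGenerator (v : ℝ) : ℝ := v * log v - (v + 1) * log ((v + 1) / 2)

lemma mul_log_div_le_sub {x y : ℝ} (hx : 0 < x) (hy : 0 < y) : x * log (y / x) ≤ y - x := by
  have h := mul_le_mul_of_nonneg_left (log_le_sub_one_of_pos (div_pos hy hx)) hx.le
  rwa [mul_sub, mul_div_cancel₀ _ hx.ne', mul_one] at h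

lemma mul_sub_jsGenerator_eq (u : ℝ) {a v : ℝ} (ha : 0 < a) (hv : 0 < v) :
    u * v - jsGenerator v =
      v * log (exp u * (v + 1) / 2 / v) + log (a * (v + 1) / 2) - log a := by
  have hv₁ : (v + 1) / 2 ≠ 0 := by positivity
  have h₁ : log (exp u * (v + 1) / 2 / v) = u + log ((v + 1) / 2) - log v := by
    rw [mul_div_assoc, log_div (by positivity) hv.ne', log_mul (exp_ne_zero u) hv₁, log_exp]
  have h₂ : log (a * (v + 1) / 2) = log a + log ((v + 1) / 2) := by
    rw [mul_div_assoc, log_mul ha.ne' hv₁]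
  rw [jsGenerator, h₁, h₂]
  ring

lemma mul_sub_jsGenerator_le {u v : ℝ} (hu : exp u < 2) (hv : 0 < v) :
    u * v - jsGenerator v ≤ -log (2 - exp u) := by
  have ha : 0 < 2 - exp u := sub_pos.2 hu
  have h₁ := mul_log_div_le_sub hv (by positivity : 0 < exp u * (v + 1) / 2)
  have h₂ := mul_log_div_le_sub one_pos (by positivity : 0 < (2 - exp u) * (v + 1) / 2)
  rw [one_mul, div_one] at h₂
  have hsum : exp u * (v + 1) / 2 + (2 - exp u) * (v + 1) / 2 = v + 1 := by ring
  rw [mul_sub_jsGenerator_eq u ha hv]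
  linarith

lemma mul_sub_jsGenerator_optimum {u : ℝ} (hu : exp u < 2) :
    u * (exp u / (2 - exp u)) - jsGenerator (exp u / (2 - exp u)) = -log (2 - exp u) := by
  have ha : 0 < 2 - exp u := sub_pos.2 hu
  have hv₁ : exp u / (2 - exp u) + 1 = 2 / (2 - exp u) := by field_simp; ring
  have h₁ : exp u * (exp u / (2 - exp u) + 1) / 2 / (exp u / (2 - exp u)) = 1 := by
    rw [hv₁]; field_simp
  have h₂ : (2 - exp u) * (exp u / (2 - exp u) + 1) / 2 = 1 := by
    rw [hv₁]; field_simp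
  rw [mul_sub_jsGenerator_eq u ha (by positivity), h₁, h₂]
  simp

/-- The Fenchel conjugate of the Jensen–Shannon generator
`f(v) = v·log v − (v + 1)·log((v + 1)/2)` is `f*(u) = −log(2 − e^u)` on `(−∞, log 2)`:
for every `u < log 2`, the supremum over `v > 0` of `u·v − f(v)` equals
`−log(2 − exp u)`. -/
theorem js_fenchel_conjugate (u : ℝ) (hu : u < Real.log 2) :
    IsLUB
      ((fun v : ℝ => u * v - (v * Real.log v - (v + 1) * Real.log ((v + 1) / 2))) ''
        Set.Ioi 0)
      (-Real.log (2 - Real.exp u)) := by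
  have hexp : exp u < 2 := (lt_log_iff_exp_lt two_pos).1 hu
  refine IsGreatest.isLUB ⟨⟨exp u / (2 - exp u), ?_, mul_sub_jsGenerator_optimum hexp⟩, ?_⟩
  · exact div_pos (exp_pos u) (sub_pos.2 hexp)
  · rintro _ ⟨v, hv, rfl⟩
    exact mul_sub_jsGenerator_le hexp hv
end

section
/- Let P and Q be probability measures on a measurable space Ω with P ≪ Q and Radon–Nikodym derivative ρ = dP/dQ satisfying ρ > 0 Q-almost everywhere, and assume f_JS ∘ ρ is Q-integrable, where f_JS(v) = v·log v − (v + 1)·log((v + 1)/2). Then for every measurable function g : Ω → ℝ such that ω ↦ log(2/(1 + e^{−g(ω)})) is P-integrable and ω ↦ log(2/(1 + e^{g(ω)})) is Q-integrable, one has ∫ log(2/(1 + e^{−g})) dP + ∫ log(2/(1 + e^{g})) dQ ≤ ∫ f_JS(ρ) dQ. -/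
open MeasureTheory

/-
For `v ≥ 0` and every real `t`, the Fenchel–Young inequality for the Jensen–Shannon
generator reads `v · log(2/(1+e^{-t})) + log(2/(1+e^t)) ≤ f_JS(v)`. Since the two arguments of the
logarithms sum to `2`, this is the two-term log-sum inequality, itself a consequence of
`a log x ≤ a log a + x - a`. Taking `v = ρ(ω)`, `t = g(ω)` and integrating against `Q`, with
`∫ h dP = ∫ ρ h dQ`, gives the bound.
-/

namespace Real

lemma mul_log_le_mul_log_add_sub {a x : ℝ} (ha : 0 ≤ a) (hx : 0 < x) :
    a * log x ≤ a * log a + x - a := by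
  rcases ha.eq_or_lt with rfl | ha
  · simpa using hx.le
  have h := mul_le_mul_of_nonneg_left (log_le_sub_one_of_pos (div_pos hx ha)) ha.le
  rw [log_div hx.ne' ha.ne', mul_sub, mul_sub, mul_div_cancel₀ _ ha.ne', mul_one] at h
  linarith

lemma mul_log_add_log_le {v p q : ℝ} (hv : 0 ≤ v) (hp : 0 < p) (hq : 0 < q) :
    v * log p + log q ≤ v * log v - (v + 1) * log ((v + 1) / (p + q)) := by
  have hv1 : 0 < v + 1 := by linarith
  have hpq : 0 < p + q := by linarith
  -- rescale `p` and `q` so that they sum to the total weight `v + 1`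
  set c := (p + q) / (v + 1) with hc
  have hc0 : 0 < c := div_pos hpq hv1
  have hp' := mul_log_le_mul_log_add_sub hv (div_pos hp hc0)
  have hq' := mul_log_le_mul_log_add_sub zero_le_one (div_pos hq hc0)
  have hsum : p / c + q / c = v + 1 := by
    rw [← add_div, hc, div_div_eq_mul_div, mul_div_cancel_left₀ _ hpq.ne']
  have hlogc : log ((v + 1) / (p + q)) = -log c := by rw [hc, ← log_inv, inv_div]
  rw [log_div hp.ne' hc0.ne'] at hp'
  rw [log_div hq.ne' hc0.ne'] at hq'
  rw [hlogc]
  simp only [log_one, mul_zero, one_mul] at hq'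
  linarith

lemma mul_log_two_div_one_add_exp_neg_add_log_le (t : ℝ) {v : ℝ} (hv : 0 ≤ v) :
    v * log (2 / (1 + exp (-t))) + log (2 / (1 + exp t)) ≤
      v * log v - (v + 1) * log ((v + 1) / 2) := by
  have hsum : 2 / (1 + exp (-t)) + 2 / (1 + exp t) = 2 := by
    rw [exp_neg]
    field_simp
    ring
  have h := mul_log_add_log_le hv (p := 2 / (1 + exp (-t))) (q := 2 / (1 + exp t))
    (by positivity) (by positivity)
  rwa [hsum] at h

end Real

lemma integral_add_integral_le_integral_toReal_rnDeriv {Ω : Type*} [MeasurableSpace Ω]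
    {P Q : Measure Ω} [P.HaveLebesgueDecomposition Q] [SigmaFinite P] (hPQ : P ≪ Q)
    {φ ψ : Ω → ℝ} {f : ℝ → ℝ} (hφ : Integrable φ P) (hψ : Integrable ψ Q)
    (hf : Integrable (fun ω => f (P.rnDeriv Q ω).toReal) Q)
    (h : ∀ v, 0 ≤ v → ∀ ω, v * φ ω + ψ ω ≤ f v) :
    ∫ ω, φ ω ∂P + ∫ ω, ψ ω ∂Q ≤ ∫ ω, f (P.rnDeriv Q ω).toReal ∂Q := by
  have hρφ : Integrable (fun ω => (P.rnDeriv Q ω).toReal * φ ω) Q :=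
    (integrable_toReal_rnDeriv_mul_iff hPQ).mpr hφ
  calc ∫ ω, φ ω ∂P + ∫ ω, ψ ω ∂Q
      = ∫ ω, ((P.rnDeriv Q ω).toReal * φ ω + ψ ω) ∂Q := by
        rw [integral_add hρφ hψ, ← integral_rnDeriv_smul hPQ]
        rfl
    _ ≤ ∫ ω, f (P.rnDeriv Q ω).toReal ∂Q :=
        integral_mono (hρφ.add hψ) hf fun ω => h _ ENNReal.toReal_nonneg ω

theorem js_variational_lower_bound_general
    {Ω : Type*} [MeasurableSpace Ω]
    (P Q : Measure Ω) [IsProbabilityMeasure P] [IsProbabilityMeasure Q]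
    (hPQ : P ≪ Q)
    (ρ : Ω → ℝ) (hρ : ρ = fun ω => (P.rnDeriv Q ω).toReal)
    (fJS : ℝ → ℝ)
    (hfJS : fJS = fun v => v * Real.log v - (v + 1) * Real.log ((v + 1) / 2))
    (hfρ_int : Integrable (fun ω => fJS (ρ ω)) Q)
    (g : Ω → ℝ)
    (hP_int : Integrable (fun ω => Real.log (2 / (1 + Real.exp (-g ω)))) P)
    (hQ_int : Integrable (fun ω => Real.log (2 / (1 + Real.exp (g ω)))) Q) :
    (∫ ω, Real.log (2 / (1 + Real.exp (-g ω))) ∂P) +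
        (∫ ω, Real.log (2 / (1 + Real.exp (g ω))) ∂Q) ≤
      ∫ ω, fJS (ρ ω) ∂Q := by
  subst hρ hfJS
  exact integral_add_integral_le_integral_toReal_rnDeriv hPQ hP_int hQ_int hfρ_int
    fun v hv ω => Real.mul_log_two_div_one_add_exp_neg_add_log_le (g ω) hv

/-- Jensen–Shannon instantiation of the variational lower bound used by FEWL, with
witness `g*(v) = log(2/(1 + e^{−v}))` and conjugate `f*(u) = −log(2 − e^u)`
(so that `−f*(g*(v)) = log(2/(1 + e^{v}))`): for `P ≪ Q` with derivative `ρ > 0`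
Q-a.e. and any measurable `g`,
`∫ log(2/(1+e^{−g})) dP + ∫ log(2/(1+e^{g})) dQ ≤ ∫ f_JS(ρ) dQ`. -/
theorem js_variational_lower_bound
    {Ω : Type*} [MeasurableSpace Ω]
    (P Q : Measure Ω) [IsProbabilityMeasure P] [IsProbabilityMeasure Q]
    (hPQ : P ≪ Q)
    (ρ : Ω → ℝ) (hρ : ρ = fun ω => (P.rnDeriv Q ω).toReal)
    (hρ_pos : ∀ᵐ ω ∂Q, 0 < ρ ω)
    (fJS : ℝ → ℝ)
    (hfJS : fJS = fun v => v * Real.log v - (v + 1) * Real.log ((v + 1) / 2))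
    (hfρ_int : Integrable (fun ω => fJS (ρ ω)) Q)
    (g : Ω → ℝ) (hg : Measurable g)
    (hP_int : Integrable (fun ω => Real.log (2 / (1 + Real.exp (-g ω)))) P)
    (hQ_int : Integrable (fun ω => Real.log (2 / (1 + Real.exp (g ω)))) Q) :
    (∫ ω, Real.log (2 / (1 + Real.exp (-g ω))) ∂P) +
        (∫ ω, Real.log (2 / (1 + Real.exp (g ω))) ∂Q) ≤
      ∫ ω, fJS (ρ ω) ∂Q :=
  js_variational_lower_bound_general P Q hPQ ρ hρ fJS hfJS hfρ_int g hP_int hQ_int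
end
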